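/- For every positive integer d, the multiple t-value t(2,2,...,2) with d repetitions of 2 equals π^{2d}/(2^{2d} (2d)!). -/

import Mathlib

/-- The multiple zeta value `ζ(s₁,…,s_l) = ∑_{1 ≤ k₁ < ⋯ < k_l} ∏ 1/kᵢ^{sᵢ}`. -/
noncomputable def MZV (s : List ℕ) : ℝ :=
  ∑' f : {f : Fin s.length → ℕ+ // StrictMono f},
    ∏ i : Fin s.length, (1 : ℝ) / ((f.1 i : ℕ) : ℝ) ^ s.get i

/-- The multiple t-value `t(s₁,…,s_l) = ∑_{1 ≤ k₁ < ⋯ < k_l} ∏ 1/(2kᵢ-1)^{sᵢ}`. -/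
noncomputable def MTV (s : List ℕ) : ℝ :=
  ∑' f : {f : Fin s.length → ℕ+ // StrictMono f},
    ∏ i : Fin s.length, (1 : ℝ) / ((2 * (f.1 i : ℕ) - 1 : ℕ) : ℝ) ^ s.get i

open Filter Finset Topology Real
open scoped Nat

/-!
`t(2,…,2)` with `d` twos is the `d`-th elementary symmetric function `e_d` of the numbers
`1/(2k-1)²`, so `∑ e_d y^d = ∏ₖ (1 + y/(2k-1)²)`. For `y = -x²` this is Euler's product for
`cos(πx/2)`, obtained by dividing the sine product for `πx` by the one for `πx/2`. The Taylor
series of `cos(π√(-y)/2)` has coefficients `(π/2)^{2d}/(2d)!`, and two convergent power series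
that agree for `-1 < y < 0` have the same coefficients by the principle of isolated zeros.
-/

def strictMonoEquivOrderEmbedding (α β : Type*) [LinearOrder α] [Preorder β] :
    {f : α → β // StrictMono f} ≃ (α ↪o β) where
  toFun f := OrderEmbedding.ofStrictMono f.1 f.2
  invFun e := ⟨e, e.strictMono⟩
  left_inv _ := rfl
  right_inv _ := rfl

theorem tsum_prod_strictMono_eq_tsum_powersetCard {ι M : Type*} [LinearOrder ι]
    [CommMonoid M] [AddCommMonoid M] [TopologicalSpace M] (d : ℕ) (g : ι → M) :
    ∑' f : {f : Fin d → ι // StrictMono f}, ∏ i, g (f.1 i) =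
      ∑' S : Set.powersetCard ι d, ∏ k ∈ S.1, g k := by
  rw [← ((strictMonoEquivOrderEmbedding (Fin d) ι).trans
    Set.powersetCard.ofFinEmbEquiv).tsum_eq]
  refine tsum_congr fun f => ?_
  simp only [Equiv.trans_apply, Set.powersetCard.ofFinEmbEquiv_apply,
    Set.powersetCard.val_ofFinEmb, prod_map]
  rfl

noncomputable def esymmTsum {ι : Type*} (b : ι → ℝ) (d : ℕ) : ℝ :=
  ∑' S : Set.powersetCard ι d, ∏ k ∈ S.1, b k

theorem esymmTsum_nonneg {ι : Type*} {b : ι → ℝ} (hb : ∀ i, 0 ≤ b i) (d : ℕ) :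
    0 ≤ esymmTsum b d :=
  tsum_nonneg fun _ => prod_nonneg fun i _ => hb i

theorem hasSum_esymmTsum_mul_pow {ι : Type*} {b : ι → ℝ} (hb : Summable b) (y : ℝ) :
    HasSum (fun d => esymmTsum b d * y ^ d) (∏' i, (1 + y * b i)) := by
  have hsum : Summable fun S : Finset ι => ∏ i ∈ S, y * b i :=
    summable_finsetProd_of_summable_norm
      ((hb.norm.mul_left ‖y‖).congr fun i => (norm_mul _ _).symm)
  have hfiber (d : ℕ) : HasSum (fun S : Set.powersetCard ι d => ∏ i ∈ S.1, y * b i)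
      (esymmTsum b d * y ^ d) := by
    have hprod := (summable_finsetProd_of_summable_norm hb.norm).subtype (Set.powersetCard ι d)
    refine (hprod.hasSum.mul_right (y ^ d)).congr_fun fun S => ?_
    rw [prod_mul_distrib, prod_const, S.2, mul_comm]
    rfl
  rw [tprod_one_add hsum]
  exact ((Set.powersetCard.prodEquiv.hasSum_iff).2 hsum.hasSum).sigma hfiber

theorem prod_range_two_mul_one_sub_sq_div (x : ℝ) (n : ℕ) :
    ∏ j ∈ range (2 * n), (1 - x ^ 2 / ((j : ℝ) + 1) ^ 2) =
      (∏ k ∈ range n, (1 - x ^ 2 / (2 * (k : ℝ) + 1) ^ 2)) *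
        ∏ k ∈ range n, (1 - (x / 2) ^ 2 / ((k : ℝ) + 1) ^ 2) := by
  induction n with
  | zero => simp
  | succ n ih =>
    rw [Nat.mul_succ, prod_range_succ, prod_range_succ, ih, prod_range_succ, prod_range_succ]
    push_cast
    field_simp
    ring

theorem Real.tendsto_euler_cos_prod {x : ℝ} (hx : sin (π * x / 2) ≠ 0) :
    Tendsto (fun n => ∏ k ∈ range n, (1 - x ^ 2 / (2 * (k : ℝ) + 1) ^ 2)) atTop
      (𝓝 (cos (π * x / 2))) := by
  have hfull := (tendsto_euler_sin_prod x).comp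
    (tendsto_atTop_mono (fun n => Nat.le_mul_of_pos_left n two_pos) tendsto_id)
  have hhalf := tendsto_euler_sin_prod (x / 2)
  rw [mul_div_assoc'] at hhalf
  have hquot := hfull.div (hhalf.const_mul 2) (mul_ne_zero two_ne_zero hx)
  have hlim : sin (π * x) / (2 * sin (π * x / 2)) = cos (π * x / 2) := by
    rw [show π * x = 2 * (π * x / 2) by ring, sin_two_mul]
    field_simp
  rw [hlim] at hquot
  refine hquot.congr' ?_
  filter_upwards [hhalf.eventually_ne hx] with n hn
  simp only [Pi.div_apply, Function.comp_apply, prod_range_two_mul_one_sub_sq_div]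
  rw [div_eq_iff (mul_ne_zero two_ne_zero hn)]
  ring

theorem Real.hasSum_cos_pi_mul_sqrt_neg_div_two {y : ℝ} (hy : y ≤ 0) :
    HasSum (fun n => (π / 2) ^ (2 * n) / (2 * n)! * y ^ n) (cos (π * √(-y) / 2)) := by
  have hsq : (π * √(-y) / 2) ^ 2 = -1 * ((π / 2) ^ 2 * y) := by
    rw [div_pow, mul_pow, sq_sqrt (neg_nonneg.2 hy)]
    ring
  refine (hasSum_cos _).congr_fun fun n => ?_
  rw [pow_mul _ 2 n, pow_mul _ 2 n, hsq, mul_pow, ← mul_assoc, ← mul_pow, neg_one_mul, neg_neg,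
    one_pow, one_mul, mul_pow]
  ring

theorem eq_of_tsum_mul_pow_eq_on_Ioo {a b : ℕ → ℝ} {r : ℝ} (hr : 0 < r)
    (ha : Summable fun n => ‖a n‖ * r ^ n) (hb : Summable fun n => ‖b n‖ * r ^ n)
    (h : ∀ y ∈ Set.Ioo (-r) 0, ∑' n, a n * y ^ n = ∑' n, b n * y ^ n) : a = b := by
  have hseries (c : ℕ → ℝ) (hc : Summable fun n => ‖c n‖ * r ^ n) :
      HasFPowerSeriesAt (FormalMultilinearSeries.ofScalarsSum c)
        (FormalMultilinearSeries.ofScalars ℝ c) 0 := by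
    have hrad : (r.toNNReal : ENNReal) ≤ (FormalMultilinearSeries.ofScalars ℝ c).radius := by
      refine FormalMultilinearSeries.le_radius_of_summable _ ?_
      simpa [FormalMultilinearSeries.ofScalars_norm, hr.le] using hc
    exact (FormalMultilinearSeries.hasFPowerSeriesOnBall _
      ((ENNReal.coe_pos.2 (Real.toNNReal_pos.2 hr)).trans_le hrad)).hasFPowerSeriesAt
  have hpa := hseries a ha
  have hpb := hseries b hb
  have hfreq : ∃ᶠ y in 𝓝[≠] (0 : ℝ), FormalMultilinearSeries.ofScalarsSum a y =
      FormalMultilinearSeries.ofScalarsSum b y := by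
    have hev : ∀ᶠ y in 𝓝[<] (0 : ℝ), y ∈ Set.Ioo (-r) 0 := Ioo_mem_nhdsLT (neg_neg_of_pos hr)
    refine (hev.mono fun y hy => ?_).frequently.filter_mono
      (nhdsWithin_mono _ fun y (hy : y < 0) => hy.ne)
    simpa [FormalMultilinearSeries.ofScalars_sum_eq] using h y hy
  have hev := (hpa.analyticAt.frequently_eq_iff_eventually_eq hpb.analyticAt).1 hfreq
  exact FormalMultilinearSeries.ofScalars_series_injective ℝ ℝ
    (hpa.eq_formalMultilinearSeries_of_eventually hpb hev)

noncomputable def oddInvSq (k : ℕ) : ℝ := 1 / ((2 * k - 1 : ℕ) : ℝ) ^ 2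

theorem oddInvSq_nonneg (k : ℕ) : 0 ≤ oddInvSq k := one_div_nonneg.2 (sq_nonneg _)

theorem oddInvSq_succ (n : ℕ) : oddInvSq (n + 1) = 1 / (2 * (n : ℝ) + 1) ^ 2 := by
  rw [oddInvSq, show 2 * (n + 1) - 1 = 2 * n + 1 by omega]
  push_cast
  rfl

theorem summable_oddInvSq : Summable fun k : ℕ+ => oddInvSq k := by
  rw [summable_pnat_iff_summable_succ]
  have hsq := (summable_nat_add_iff 1).2 (summable_one_div_nat_pow.2 one_lt_two)
  refine hsq.of_nonneg_of_le (fun n => oddInvSq_nonneg _) fun n => ?_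
  rw [oddInvSq_succ]
  push_cast
  gcongr
  linarith [(n.cast_nonneg : (0 : ℝ) ≤ n)]

theorem tprod_one_sub_sq_mul_oddInvSq {x : ℝ} (hx : sin (π * x / 2) ≠ 0) :
    ∏' k : ℕ+, (1 + -x ^ 2 * oddInvSq k) = cos (π * x / 2) := by
  rw [tprod_pnat_eq_tprod_succ (f := fun k => 1 + -x ^ 2 * oddInvSq k)]
  have hmult : Multipliable fun n : ℕ => 1 + -x ^ 2 * oddInvSq (n + 1) :=
    Real.multipliable_one_add_of_summable
      ((summable_pnat_iff_summable_succ.1 summable_oddInvSq).mul_left _)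
  refine tendsto_nhds_unique hmult.hasProd.tendsto_prod_nat ?_
  simpa only [oddInvSq_succ, neg_mul, mul_one_div, neg_div, ← sub_eq_add_neg] using
    tendsto_euler_cos_prod hx

theorem esymmTsum_oddInvSq (d : ℕ) :
    esymmTsum (fun k : ℕ+ => oddInvSq k) d = (π / 2) ^ (2 * d) / (2 * d)! := by
  have hgen := hasSum_esymmTsum_mul_pow summable_oddInvSq
  refine congrFun (eq_of_tsum_mul_pow_eq_on_Ioo (b := fun n => (π / 2) ^ (2 * n) / (2 * n)!)
    one_pos ?_ ?_ fun y hy => ?_) d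
  · have hnonneg := esymmTsum_nonneg fun k : ℕ+ => oddInvSq_nonneg k
    simpa [abs_of_nonneg (hnonneg _)] using (hgen 1).summable
  · simpa [abs_of_nonneg, pi_nonneg] using (hasSum_cosh (π / 2)).summable
  · obtain ⟨x, hx0, hx1, rfl⟩ : ∃ x, 0 < x ∧ x < 1 ∧ y = -x ^ 2 :=
      ⟨√(-y), sqrt_pos.2 (by linarith [hy.2]), (sqrt_lt' one_pos).2 (by linarith [hy.1]),
        by rw [sq_sqrt (by linarith [hy.2]), neg_neg]⟩
    have hsin : sin (π * x / 2) ≠ 0 :=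
      (sin_pos_of_pos_of_lt_pi (by positivity) (by nlinarith [pi_pos])).ne'
    rw [(hgen _).tsum_eq, tprod_one_sub_sq_mul_oddInvSq hsin,
      (hasSum_cos_pi_mul_sqrt_neg_div_two (neg_nonpos.2 (sq_nonneg x))).tsum_eq, neg_neg,
      sqrt_sq hx0.le]

theorem MTV_replicate_two (d : ℕ) :
    MTV (List.replicate d 2) = esymmTsum (fun k : ℕ+ => oddInvSq k) d := by
  unfold MTV
  simp only [List.get_eq_getElem, List.getElem_replicate]
  rw [List.length_replicate]
  exact tsum_prod_strictMono_eq_tsum_powersetCard (M := ℝ) d (fun k : ℕ+ => oddInvSq k)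

theorem stmt_5_general (d : ℕ) :
    MTV (List.replicate d 2) =
      Real.pi ^ (2 * d) / (2 ^ (2 * d) * (Nat.factorial (2 * d) : ℝ)) := by
  rw [MTV_replicate_two, esymmTsum_oddInvSq, div_pow, div_div]

theorem stmt_5 (d : ℕ) (hd : 0 < d) :
    MTV (List.replicate d 2) =
      Real.pi ^ (2 * d) / (2 ^ (2 * d) * (Nat.factorial (2 * d) : ℝ)) :=
  stmt_5_general d
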